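/- Let λ > 0, let ψ ∈ P^r satisfy Γ_λ(ψ) = L(1), let φ ∈ P^r satisfy φ' − λ φ − L̂(φ(t₁)) = L(1) on I, and define e(t) = exp(−λ(t−t₀)) − ψ(t). Then for all w, v ∈ P^r with Γ_λ(v) = w and all t ∈ I, v(t) = −(e(t)/e(t₀)) · ∫_I w(s) φ(s) ds + ∫_{t₀}^{t} exp(λ(s−t)) w(s) ds. -/

import Mathlib

/-!
Testing `Γ_λ v = w` against the discrete dual solution `φ` and integrating by parts, the lifting
identities `∫_I L(z) V = z V(t₀)` and `∫_I L̂(z) V = z V(t₁)` (the lifts are reproducing kernels of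
point evaluation on `P^r`) leave `∫_I w φ = -v(t₀)`. On the other hand
`ψ' + λ ψ = (1 - ψ(t₀)) L(1)`, and `e(t₀) = 1 - ψ(t₀) ≠ 0` because otherwise `ψ' + λ ψ = 0`
forces `ψ = 0`. Hence `u = v + c ψ` with `c = v(t₀) / e(t₀)` solves `u' + λ u = w` exactly, with
`u(t₀) = c`, and variation of constants gives the formula.
-/

open Polynomial MeasureTheory intervalIntegral

/-- The rescaled Legendre polynomials on `[t₀, t₁]`: `K i` has degree `i`,
`K i (t₁) = 1`, `K i (t₀) = (-1)^i`, and they are `L²(t₀,t₁)`-orthogonal with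
`∫ K i ^ 2 = (t₁ - t₀)/(2 i + 1)`. -/
def IsLegendreBasis (t₀ t₁ : ℝ) (K : ℕ → Polynomial ℝ) : Prop :=
  (∀ i, (K i).natDegree = i) ∧ (∀ i, (K i).eval t₁ = 1) ∧
  (∀ i, (K i).eval t₀ = (-1 : ℝ) ^ i) ∧
  (∀ i j, (∫ t in t₀..t₁, (K i).eval t * (K j).eval t) =
    if i = j then (t₁ - t₀) / (2 * (i : ℝ) + 1) else 0)

/-- The lifting operator `L(z) = (z/k) ∑_{i=0}^r (-1)^i (2i+1) K_i`. -/
noncomputable def Lop (t₀ t₁ : ℝ) (r : ℕ) (K : ℕ → Polynomial ℝ) (z : ℝ) : Polynomial ℝ :=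
  Polynomial.C (z / (t₁ - t₀)) *
    ∑ i ∈ Finset.range (r + 1), Polynomial.C ((-1 : ℝ) ^ i * (2 * (i : ℝ) + 1)) * K i

/-- The endpoint lifting operator `L̂(z) = (z/k) ∑_{i=0}^r (2i+1) K_i`. -/
noncomputable def LopE (t₀ t₁ : ℝ) (r : ℕ) (K : ℕ → Polynomial ℝ) (z : ℝ) : Polynomial ℝ :=
  Polynomial.C (z / (t₁ - t₀)) *
    ∑ i ∈ Finset.range (r + 1), Polynomial.C (2 * (i : ℝ) + 1) * K i

/-- The scalar dG operator `Γ_λ(v) = v' + L(v(t₀)) + λ v`. -/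
noncomputable def Gam (t₀ t₁ : ℝ) (r : ℕ) (K : ℕ → Polynomial ℝ) (lam : ℝ)
    (v : Polynomial ℝ) : Polynomial ℝ :=
  Polynomial.derivative v + Lop t₀ t₁ r K (v.eval t₀) + Polynomial.C lam * v

/-- The dG error function `e(t) = exp(-λ (t - t₀)) - ψ(t)`. -/
noncomputable def errF (t₀ lam : ℝ) (ψ : Polynomial ℝ) (t : ℝ) : ℝ :=
  Real.exp (-lam * (t - t₀)) - ψ.eval t

namespace Polynomial

theorem eq_zero_of_derivative_add_C_mul_eq_zero {lam : ℝ} (hlam : lam ≠ 0) {p : ℝ[X]}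
    (h : derivative p + C lam * p = 0) : p = 0 := by
  by_contra hp
  have hcoeff := congrArg (coeff · p.natDegree) h
  simp only [coeff_add, coeff_C_mul, coeff_derivative, coeff_zero,
    coeff_eq_zero_of_natDegree_lt (Nat.lt_succ_self p.natDegree), zero_mul, zero_add,
    mul_eq_zero, hlam, false_or] at hcoeff
  exact hp (leadingCoeff_eq_zero.mp hcoeff)

theorem intervalIntegrable_eval_mul_eval (p q : ℝ[X]) (a b : ℝ) :
    IntervalIntegrable (fun t => p.eval t * q.eval t) volume a b :=
  (p.continuous.mul q.continuous).intervalIntegrable a b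

noncomputable def l2Pairing (a b : ℝ) : ℝ[X] →ₗ[ℝ] ℝ[X] →ₗ[ℝ] ℝ :=
  LinearMap.mk₂ ℝ (fun p q => ∫ t in a..b, p.eval t * q.eval t)
    (fun p₁ p₂ q => by
      simp only [eval_add, add_mul]
      exact intervalIntegral.integral_add (intervalIntegrable_eval_mul_eval p₁ q a b)
        (intervalIntegrable_eval_mul_eval p₂ q a b))
    (fun c p q => by simp [mul_assoc, intervalIntegral.integral_const_mul])
    (fun p q₁ q₂ => by
      simp only [eval_add, mul_add]
      exact intervalIntegral.integral_add (intervalIntegrable_eval_mul_eval p q₁ a b)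
        (intervalIntegrable_eval_mul_eval p q₂ a b))
    (fun c p q => by simp [mul_left_comm _ c, intervalIntegral.integral_const_mul])

theorem l2Pairing_apply (a b : ℝ) (p q : ℝ[X]) :
    l2Pairing a b p q = ∫ t in a..b, p.eval t * q.eval t := rfl

theorem l2Pairing_comm (a b : ℝ) (p q : ℝ[X]) : l2Pairing a b p q = l2Pairing a b q p := by
  simp only [l2Pairing_apply, mul_comm]

theorem l2Pairing_derivative_add (a b : ℝ) (p q : ℝ[X]) :
    l2Pairing a b (derivative p) q + l2Pairing a b p (derivative q)
      = p.eval b * q.eval b - p.eval a * q.eval a := by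
  rw [l2Pairing_apply, l2Pairing_apply,
    ← intervalIntegral.integral_add (intervalIntegrable_eval_mul_eval _ _ a b)
      (intervalIntegrable_eval_mul_eval _ _ a b)]
  exact integral_deriv_mul_eq_sub (fun x _ => p.hasDerivAt x) (fun x _ => q.hasDerivAt x)
    ((derivative p).continuous.intervalIntegrable a b)
    ((derivative q).continuous.intervalIntegrable a b)

end Polynomial

theorem integral_exp_mul_eq_sub_of_hasDerivAt {u f : ℝ → ℝ} {lam a b : ℝ}
    (hu : ∀ x ∈ Set.uIcc a b, HasDerivAt u (f x - lam * u x) x)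
    (hf : IntervalIntegrable f volume a b) :
    ∫ s in a..b, Real.exp (lam * (s - b)) * f s = u b - Real.exp (-lam * (b - a)) * u a := by
  have hexp : Continuous fun s => Real.exp (lam * (s - b)) := by fun_prop
  have hderiv : ∀ x ∈ Set.uIcc a b, HasDerivAt (fun s => Real.exp (lam * (s - b)) * u s)
      (Real.exp (lam * (x - b)) * f x) x := by
    intro x hx
    have hE : HasDerivAt (fun s => Real.exp (lam * (s - b))) (Real.exp (lam * (x - b)) * lam) x :=
      (((hasDerivAt_id x).sub_const b).const_mul lam).exp.congr_deriv (by simp)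
    exact (hE.mul (hu x hx)).congr_deriv (by ring)
  rw [integral_eq_sub_of_hasDerivAt hderiv (hf.continuousOn_mul hexp.continuousOn)]
  simp only [sub_self, mul_zero, Real.exp_zero, one_mul]
  ring_nf

namespace IsLegendreBasis

variable {t₀ t₁ : ℝ} {K : ℕ → ℝ[X]}

theorem natDegree_eq (hK : IsLegendreBasis t₀ t₁ K) (i : ℕ) : (K i).natDegree = i := hK.1 i

theorem eval_right (hK : IsLegendreBasis t₀ t₁ K) (i : ℕ) : (K i).eval t₁ = 1 := hK.2.1 i

theorem eval_left (hK : IsLegendreBasis t₀ t₁ K) (i : ℕ) : (K i).eval t₀ = (-1) ^ i := hK.2.2.1 i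

theorem l2Pairing_eq (hK : IsLegendreBasis t₀ t₁ K) (i j : ℕ) :
    l2Pairing t₀ t₁ (K i) (K j) = if i = j then (t₁ - t₀) / (2 * (i : ℝ) + 1) else 0 :=
  hK.2.2.2 i j

theorem ne_zero (hK : IsLegendreBasis t₀ t₁ K) (i : ℕ) : K i ≠ 0 := by
  intro h
  simpa [h] using hK.eval_right i

/-- `K` as a `Polynomial.Sequence`, to use the spanning results proved for those. -/
noncomputable def toSequence (hK : IsLegendreBasis t₀ t₁ K) : Polynomial.Sequence ℝ where
  elems' := K
  degree_eq' i := (degree_eq_iff_natDegree_eq (hK.ne_zero i)).mpr (hK.natDegree_eq i)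

theorem mem_span_of_natDegree_le (hK : IsLegendreBasis t₀ t₁ K) {r : ℕ} {V : ℝ[X]}
    (hV : V.natDegree ≤ r) : V ∈ Submodule.span ℝ (K '' Set.Iic r) := by
  have hspan := hK.toSequence.span_degreeLE (m := r) fun i _ =>
    (leadingCoeff_ne_zero.mpr (hK.ne_zero i)).isUnit
  rw [show ⇑hK.toSequence = K from rfl] at hspan
  rw [hspan, mem_degreeLE]
  exact natDegree_le_iff_degree_le.mp hV

/-- `∑_{i ≤ r} (2i+1)/k K_i(p) K_i` is the reproducing kernel of point evaluation at `p`
on polynomials of degree `≤ r`. -/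
theorem l2Pairing_kernel (hK : IsLegendreBasis t₀ t₁ K) (ht : t₀ ≠ t₁) {r : ℕ} {c : ℕ → ℝ}
    {p : ℝ} (hc : ∀ i, (K i).eval p = c i) (z : ℝ) {V : ℝ[X]} (hV : V.natDegree ≤ r) :
    l2Pairing t₀ t₁ (C (z / (t₁ - t₀)) *
        ∑ i ∈ Finset.range (r + 1), C (c i * (2 * (i : ℝ) + 1)) * K i) V
      = z * V.eval p := by
  suffices Set.EqOn (l2Pairing t₀ t₁ (C (z / (t₁ - t₀)) *
      ∑ i ∈ Finset.range (r + 1), C (c i * (2 * (i : ℝ) + 1)) * K i)) (z • leval p : ℝ[X] →ₗ[ℝ] ℝ)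
      (Submodule.span ℝ (K '' Set.Iic r)) from this (hK.mem_span_of_natDegree_le hV)
  refine LinearMap.eqOn_span' ?_
  rintro _ ⟨j, hj, rfl⟩
  have hj' : j ∈ Finset.range (r + 1) := Finset.mem_range.mpr (Nat.lt_succ_of_le hj)
  simp only [← smul_eq_C_mul, map_smul, map_sum, LinearMap.smul_apply, LinearMap.sum_apply,
    hK.l2Pairing_eq, smul_eq_mul, mul_ite, mul_zero, Finset.sum_ite_eq',
    if_pos hj', leval_apply, hc]
  field_simp

end IsLegendreBasis

section dG

variable {t₀ t₁ : ℝ} {r : ℕ} {K : ℕ → ℝ[X]}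

theorem l2Pairing_Lop (hK : IsLegendreBasis t₀ t₁ K) (ht : t₀ ≠ t₁) (z : ℝ) {V : ℝ[X]}
    (hV : V.natDegree ≤ r) : l2Pairing t₀ t₁ (Lop t₀ t₁ r K z) V = z * V.eval t₀ :=
  hK.l2Pairing_kernel ht hK.eval_left z hV

theorem l2Pairing_LopE (hK : IsLegendreBasis t₀ t₁ K) (ht : t₀ ≠ t₁) (z : ℝ) {V : ℝ[X]}
    (hV : V.natDegree ≤ r) : l2Pairing t₀ t₁ (LopE t₀ t₁ r K z) V = z * V.eval t₁ := by
  simpa only [LopE, one_mul] using hK.l2Pairing_kernel (c := fun _ => 1) ht hK.eval_right z hV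

theorem Lop_eq_C_mul (z : ℝ) : Lop t₀ t₁ r K z = C z * Lop t₀ t₁ r K 1 := by
  simp only [Lop, ← mul_assoc, ← C_mul, mul_one_div]

theorem Gam_eq (lam : ℝ) (v : ℝ[X]) :
    Gam t₀ t₁ r K lam v = derivative v + C (v.eval t₀) * Lop t₀ t₁ r K 1 + C lam * v := by
  rw [Gam, Lop_eq_C_mul]

theorem l2Pairing_Gam_eq_neg_eval (hK : IsLegendreBasis t₀ t₁ K) (ht : t₀ ≠ t₁) {lam : ℝ}
    {φ : ℝ[X]} (hφdeg : φ.natDegree ≤ r)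
    (hφ : derivative φ - C lam * φ - LopE t₀ t₁ r K (φ.eval t₁) = Lop t₀ t₁ r K 1)
    {v : ℝ[X]} (hv : v.natDegree ≤ r) :
    l2Pairing t₀ t₁ (Gam t₀ t₁ r K lam v) φ = -v.eval t₀ := by
  have hφ' : derivative φ = C lam * φ + LopE t₀ t₁ r K (φ.eval t₁) + Lop t₀ t₁ r K 1 := by
    linear_combination hφ
  have hparts := l2Pairing_derivative_add t₀ t₁ v φ
  rw [hφ'] at hparts
  simp only [Gam, map_add, LinearMap.add_apply, ← smul_eq_C_mul, map_smul, smul_eq_mul,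
    LinearMap.smul_apply, l2Pairing_Lop hK ht _ hφdeg] at hparts ⊢
  rw [l2Pairing_comm _ _ _ (LopE _ _ _ _ _), l2Pairing_comm _ _ _ (Lop _ _ _ _ _),
    l2Pairing_LopE hK ht _ hv, l2Pairing_Lop hK ht _ hv] at hparts
  linarith

theorem eval_ne_one_of_Gam_eq_Lop_one {lam : ℝ} (hlam : lam ≠ 0) {ψ : ℝ[X]}
    (hψ : Gam t₀ t₁ r K lam ψ = Lop t₀ t₁ r K 1) : ψ.eval t₀ ≠ 1 := by
  intro h
  rw [Gam, h] at hψ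
  have hψ0 := eq_zero_of_derivative_add_C_mul_eq_zero (p := ψ) hlam (by linear_combination hψ)
  simp [hψ0] at h

theorem errF_self (t₀ lam : ℝ) (ψ : ℝ[X]) : errF t₀ lam ψ t₀ = 1 - ψ.eval t₀ := by
  simp [errF]

theorem derivative_add_C_mul_eq_of_Gam_eq {lam c : ℝ} {v w ψ : ℝ[X]}
    (hv : Gam t₀ t₁ r K lam v = w) (hψ : Gam t₀ t₁ r K lam ψ = Lop t₀ t₁ r K 1)
    (hc : c * (1 - ψ.eval t₀) = v.eval t₀) :
    derivative (v + C c * ψ) = w - C lam * (v + C c * ψ) := by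
  rw [Gam_eq] at hv hψ
  have hC : C c * (1 - C (ψ.eval t₀)) = C (v.eval t₀) := by
    rw [← hc, C_mul, C_sub, C_1]
  simp only [derivative_add, derivative_C_mul]
  linear_combination hv + C c * hψ + Lop t₀ t₁ r K 1 * hC

end dG

theorem stmt_12_general (t₀ t₁ : ℝ) (ht : t₀ < t₁) (r : ℕ) (K : ℕ → Polynomial ℝ)
    (hK : IsLegendreBasis t₀ t₁ K) (lam : ℝ) (hlam : 0 < lam)
    (ψ : Polynomial ℝ)
    (hψ : Gam t₀ t₁ r K lam ψ = Lop t₀ t₁ r K 1)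
    (φ : Polynomial ℝ) (hφdeg : φ.natDegree ≤ r)
    (hφ : Polynomial.derivative φ - Polynomial.C lam * φ - LopE t₀ t₁ r K (φ.eval t₁)
      = Lop t₀ t₁ r K 1) :
    ∀ w v : Polynomial ℝ, w.natDegree ≤ r → v.natDegree ≤ r →
      Gam t₀ t₁ r K lam v = w →
      ∀ t ∈ Set.Ioc t₀ t₁,
        v.eval t = -(errF t₀ lam ψ t / errF t₀ lam ψ t₀) *
            (∫ s in t₀..t₁, w.eval s * φ.eval s)
          + ∫ s in t₀..t, Real.exp (lam * (s - t)) * w.eval s := by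
  intro w v _ hv hw t _
  have he₀ : errF t₀ lam ψ t₀ ≠ 0 := by
    rw [errF_self, sub_ne_zero]
    exact (eval_ne_one_of_Gam_eq_Lop_one hlam.ne' hψ).symm
  obtain ⟨c, hc⟩ : ∃ c, c * (1 - ψ.eval t₀) = v.eval t₀ :=
    ⟨v.eval t₀ / errF t₀ lam ψ t₀, by rw [← errF_self]; exact div_mul_cancel₀ _ he₀⟩
  have hu := derivative_add_C_mul_eq_of_Gam_eq hw hψ hc
  have hvc := integral_exp_mul_eq_sub_of_hasDerivAt (a := t₀) (b := t)
    (u := fun s => (v + C c * ψ).eval s) (f := fun s => w.eval s) (lam := lam)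
    (fun s _ => by simpa [hu] using (v + C c * ψ).hasDerivAt s)
    (w.continuous.intervalIntegrable _ _)
  have hdual : ∫ s in t₀..t₁, w.eval s * φ.eval s = -v.eval t₀ := by
    rw [← l2Pairing_apply, ← hw]
    exact l2Pairing_Gam_eq_neg_eval hK ht.ne hφdeg hφ hv
  have hcoeff : -(errF t₀ lam ψ t / errF t₀ lam ψ t₀) * -v.eval t₀ = c * errF t₀ lam ψ t := by
    rw [← hc, ← errF_self]
    field_simp
  rw [hdual, hcoeff, hvc]
  simp only [eval_add, eval_mul, eval_C, errF]
  linear_combination -Real.exp (-lam * (t - t₀)) * hc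

/-- The representation formula
`v(t) = -(e(t)/e(t₀)) ∫_I w φ + ∫_{t₀}^t exp(λ(s-t)) w(s) ds` for `Γ_λ(v) = w`. -/
theorem stmt_12 (t₀ t₁ : ℝ) (ht : t₀ < t₁) (r : ℕ) (K : ℕ → Polynomial ℝ)
    (hK : IsLegendreBasis t₀ t₁ K) (lam : ℝ) (hlam : 0 < lam)
    (ψ : Polynomial ℝ) (hψdeg : ψ.natDegree ≤ r)
    (hψ : Gam t₀ t₁ r K lam ψ = Lop t₀ t₁ r K 1)
    (φ : Polynomial ℝ) (hφdeg : φ.natDegree ≤ r)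
    (hφ : Polynomial.derivative φ - Polynomial.C lam * φ - LopE t₀ t₁ r K (φ.eval t₁)
      = Lop t₀ t₁ r K 1) :
    ∀ w v : Polynomial ℝ, w.natDegree ≤ r → v.natDegree ≤ r →
      Gam t₀ t₁ r K lam v = w →
      ∀ t ∈ Set.Ioc t₀ t₁,
        v.eval t = -(errF t₀ lam ψ t / errF t₀ lam ψ t₀) *
            (∫ s in t₀..t₁, w.eval s * φ.eval s)
          + ∫ s in t₀..t, Real.exp (lam * (s - t)) * w.eval s :=
  stmt_12_general t₀ t₁ ht r K hK lam hlam ψ hψ φ hφdeg hφ
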